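/- Let E₀, E₁ be vector bundles over a manifold X, D₀, D₁ Fredholm elliptic first-order operators that coincide outside a compact set K (via a bundle isomorphism over X∖K), with Green's operators G₀, G₁ and finite-rank projections H₀, H₁ as in DG = I − H. Then the difference (G₁ − G₀)|_{X∖K} has finite-dimensional range; in particular it is trace class. -/
import Mathlib

/-- Abstract form of the relative-index argument: if `D₀, D₁` coincide (with a
common restriction `D`) outside a compact set, with Green's operators
`G₀, G₁` satisfying `D ∘ Gᵢ = I − Hᵢ` for finite-rank projections `Hᵢ`, and `D`
is Fredholm (in particular `ker D` is finite-dimensional), then the difference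
`G₁ − G₀` has finite-dimensional range; in particular it is of trace class. -/
theorem stmt16 (V W : Type)
    [AddCommGroup V] [Module ℂ V] [AddCommGroup W] [Module ℂ W]
    (D : V →ₗ[ℂ] W) (G₀ G₁ : W →ₗ[ℂ] V) (H₀ H₁ : W →ₗ[ℂ] W)
    (h₀ : D ∘ₗ G₀ = LinearMap.id - H₀)
    (h₁ : D ∘ₗ G₁ = LinearMap.id - H₁)
    (hH₀ : FiniteDimensional ℂ (LinearMap.range H₀))
    (hH₁ : FiniteDimensional ℂ (LinearMap.range H₁))
    (hker : FiniteDimensional ℂ (LinearMap.ker D)) :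
    FiniteDimensional ℂ (LinearMap.range (G₁ - G₀)) := by
  set S := LinearMap.range (G₁ - G₀)
  -- D ∘ (G₁ - G₀) = H₀ - H₁
  have hD : D ∘ₗ (G₁ - G₀) = H₀ - H₁ := by
    have : D ∘ₗ (G₁ - G₀) = (D ∘ₗ G₁) - (D ∘ₗ G₀) := by
      ext x; simp
    rw [this, h₀, h₁]; abel
  -- image of S under D is contained in range H₀ ⊔ range H₁
  have hmap : Submodule.map D S ≤ LinearMap.range H₀ ⊔ LinearMap.range H₁ := by
    rintro y ⟨x, ⟨w, rfl⟩, rfl⟩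
    have : D ((G₁ - G₀) w) = (H₀ - H₁) w := by
      have := congrArg (fun f => f w) hD
      simpa using this
    rw [this]
    have : (H₀ - H₁) w = H₀ w + (-(H₁ w)) := by simp [sub_eq_add_neg]
    rw [this]
    exact Submodule.add_mem _ (Submodule.mem_sup_left ⟨w, rfl⟩)
      (Submodule.neg_mem _ (Submodule.mem_sup_right ⟨w, rfl⟩))
  have hsup : FiniteDimensional ℂ ↥(LinearMap.range H₀ ⊔ LinearMap.range H₁) :=
    Submodule.finiteDimensional_sup _ _
  have hmapfd : FiniteDimensional ℂ (Submodule.map D S) :=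
    Submodule.finiteDimensional_of_le hmap
  have hinf : FiniteDimensional ℂ ↥(S ⊓ LinearMap.ker D) :=
    Submodule.finiteDimensional_of_le inf_le_right
  have h1 : (Submodule.map D S).FG := Module.Finite.iff_fg.mp hmapfd
  have h2 : (S ⊓ LinearMap.ker D).FG := Module.Finite.iff_fg.mp hinf
  exact Module.Finite.iff_fg.mpr (Submodule.fg_of_fg_map_of_fg_inf_ker D h1 h2)
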